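/- Equivalence theorem: for any sequent J = (Γ ⊢ A), the singleton goal sequence J reduces to the empty sequence under the tactics transition system (J ▷⁺ □) if and only if J is derivable in natural deduction for minimal propositional logic. -/

import Mathlib

/-- Formulas of minimal propositional logic. -/
inductive Fm : Type
  | var : ℕ → Fm
  | imp : Fm → Fm → Fm
  | conj : Fm → Fm → Fm
  | disj : Fm → Fm → Fm
deriving DecidableEq

abbrev Ctx := Set Fm

/-- Natural deduction for minimal propositional logic. -/
inductive Nd : Ctx → Fm → Prop
  | hyp {Γ A} : A ∈ Γ → Nd Γ A
  | impI {Γ A B} : Nd (insert A Γ) B → Nd Γ (Fm.imp A B)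
  | impE {Γ A B} : Nd Γ (Fm.imp A B) → Nd Γ A → Nd Γ B
  | andI {Γ A B} : Nd Γ A → Nd Γ B → Nd Γ (Fm.conj A B)
  | andE1 {Γ A B} : Nd Γ (Fm.conj A B) → Nd Γ A
  | andE2 {Γ A B} : Nd Γ (Fm.conj A B) → Nd Γ B
  | orI1 {Γ A B} : Nd Γ A → Nd Γ (Fm.disj A B)
  | orI2 {Γ A B} : Nd Γ B → Nd Γ (Fm.disj A B)
  | orE {Γ A B C} : Nd Γ (Fm.disj A B) → Nd (insert A Γ) C → Nd (insert B Γ) C → Nd Γ C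

/-- Sequents (judgements) Γ ⊢ A. -/
abbrev Seqt := Ctx × Fm

/-- One step of the tactics transition system on goal sequences. -/
inductive Step : List Seqt → List Seqt → Prop
  | intro {Γ A B S} : Step ((Γ, Fm.imp A B) :: S) ((insert A Γ, B) :: S)
  | split {Γ A B S} : Step ((Γ, Fm.conj A B) :: S) ((Γ, A) :: (Γ, B) :: S)
  | left {Γ A B S} : Step ((Γ, Fm.disj A B) :: S) ((Γ, A) :: S)
  | right {Γ A B S} : Step ((Γ, Fm.disj A B) :: S) ((Γ, B) :: S)
  | apply {Γ A B S} :
      Step ((insert (Fm.imp A B) Γ, B) :: S) ((insert (Fm.imp A B) Γ, A) :: S)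
  | destructAnd {Γ A B C S} :
      Step ((insert (Fm.conj A B) Γ, C) :: S) ((insert A (insert B Γ), C) :: S)
  | destructOr {Γ A B C S} :
      Step ((insert (Fm.disj A B) Γ, C) :: S) ((insert A Γ, C) :: (insert B Γ, C) :: S)
  | assert {Γ C S} (A : Fm) : Step ((Γ, C) :: S) ((Γ, A) :: (insert A Γ, C) :: S)
  | cut {Γ C S} (A : Fm) : Step ((Γ, C) :: S) ((Γ, Fm.imp A C) :: (Γ, A) :: S)
  | triv {Γ A S} : A ∈ Γ → Step ((Γ, A) :: S) S

/-!
Soundness: every tactic step is backed by a natural-deduction rule, so if all goals after a step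
are derivable then so are all goals before it; an empty goal list is trivially derivable.
Completeness: by induction on the derivation, each rule is simulated by tactics that replace the
goal by the goals of its premises. The elimination rules become `assert` of the major premise
followed by `apply` / `destruct` / `trivial`, which enlarges the context; this is why the simulation
is stated for every context containing the original one.
-/

theorem Nd.mono {Γ Δ : Ctx} {A : Fm} (h : Nd Γ A) (hΓΔ : Γ ⊆ Δ) : Nd Δ A := by
  induction h generalizing Δ with
  | hyp hA => exact .hyp (hΓΔ hA)
  | impI _ ih => exact .impI (ih (Set.insert_subset_insert hΓΔ))
  | impE _ _ ih₁ ih₂ => exact .impE (ih₁ hΓΔ) (ih₂ hΓΔ)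
  | andI _ _ ih₁ ih₂ => exact .andI (ih₁ hΓΔ) (ih₂ hΓΔ)
  | andE1 _ ih => exact .andE1 (ih hΓΔ)
  | andE2 _ ih => exact .andE2 (ih hΓΔ)
  | orI1 _ ih => exact .orI1 (ih hΓΔ)
  | orI2 _ ih => exact .orI2 (ih hΓΔ)
  | orE _ _ _ ih₁ ih₂ ih₃ =>
      exact .orE (ih₁ hΓΔ) (ih₂ (Set.insert_subset_insert hΓΔ))
        (ih₃ (Set.insert_subset_insert hΓΔ))

def AllNd : List Seqt → Prop
  | [] => True
  | J :: S => Nd J.1 J.2 ∧ AllNd S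

theorem AllNd.of_step {S T : List Seqt} (hST : Step S T) (hT : AllNd T) : AllNd S := by
  cases hST with
  | intro =>
      obtain ⟨hB, hS⟩ := hT
      exact ⟨.impI hB, hS⟩
  | split =>
      obtain ⟨hA, hB, hS⟩ := hT
      exact ⟨.andI hA hB, hS⟩
  | left =>
      obtain ⟨hA, hS⟩ := hT
      exact ⟨.orI1 hA, hS⟩
  | right =>
      obtain ⟨hB, hS⟩ := hT
      exact ⟨.orI2 hB, hS⟩
  | apply =>
      obtain ⟨hA, hS⟩ := hT
      exact ⟨.impE (.hyp (Set.mem_insert _ _)) hA, hS⟩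
  | @destructAnd Γ A B =>
      obtain ⟨hC, hS⟩ := hT
      have hAB : Nd (insert (Fm.conj A B) Γ) (Fm.conj A B) := .hyp (Set.mem_insert _ _)
      have hBAC := (Nd.impI (Nd.impI hC)).mono (Set.subset_insert (Fm.conj A B) Γ)
      exact ⟨.impE (.impE hBAC (.andE2 hAB)) (.andE1 hAB), hS⟩
  | @destructOr Γ A B =>
      obtain ⟨hAC, hBC, hS⟩ := hT
      have hsub (X : Fm) : insert X Γ ⊆ insert X (insert (Fm.disj A B) Γ) :=
        Set.insert_subset_insert (Set.subset_insert _ _)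
      exact ⟨.orE (.hyp (Set.mem_insert _ _)) (hAC.mono (hsub A)) (hBC.mono (hsub B)), hS⟩
  | assert =>
      obtain ⟨hA, hAC, hS⟩ := hT
      exact ⟨.impE (.impI hAC) hA, hS⟩
  | cut =>
      obtain ⟨hAC, hA, hS⟩ := hT
      exact ⟨.impE hAC hA, hS⟩
  | triv hA => exact ⟨.hyp hA, hT⟩

theorem AllNd.of_transGen_nil {S : List Seqt} (h : Relation.TransGen Step S []) : AllNd S := by
  induction h using Relation.TransGen.head_induction_on with
  | single hS => exact AllNd.of_step hS trivial
  | head hST _ ih => exact AllNd.of_step hST ih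

theorem Nd.transGen_step {Γ : Ctx} {A : Fm} (h : Nd Γ A) {Δ : Ctx} (hΓΔ : Γ ⊆ Δ)
    (S : List Seqt) : Relation.TransGen Step ((Δ, A) :: S) S := by
  induction h generalizing Δ S with
  | hyp hA => exact .single (.triv (hΓΔ hA))
  | impI _ ih => exact .head .intro (ih (Set.insert_subset_insert hΓΔ) S)
  | @impE Γ A B _ _ ih₁ ih₂ =>
      refine .head (.assert (Fm.imp A B)) (.trans (ih₁ hΓΔ _) ?_)
      exact .head .apply (ih₂ (hΓΔ.trans (Set.subset_insert _ _)) S)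
  | andI _ _ ih₁ ih₂ => exact .head .split (.trans (ih₁ hΓΔ _) (ih₂ hΓΔ S))
  | @andE1 Γ A B _ ih =>
      refine .head (.assert (Fm.conj A B)) (.trans (ih hΓΔ _) ?_)
      exact .head .destructAnd (.single (.triv (Set.mem_insert _ _)))
  | @andE2 Γ A B _ ih =>
      refine .head (.assert (Fm.conj A B)) (.trans (ih hΓΔ _) ?_)
      exact .head .destructAnd (.single (.triv (Set.mem_insert_of_mem _ (Set.mem_insert _ _))))
  | orI1 _ ih => exact .head .left (ih hΓΔ S)
  | orI2 _ ih => exact .head .right (ih hΓΔ S)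
  | @orE Γ A B _ _ _ _ ih₁ ih₂ ih₃ =>
      refine .head (.assert (Fm.disj A B)) (.trans (ih₁ hΓΔ _) ?_)
      refine .head .destructOr (.trans (ih₂ (Set.insert_subset_insert hΓΔ) _) ?_)
      exact ih₃ (Set.insert_subset_insert hΓΔ) S

theorem stmt12 {Γ : Ctx} {A : Fm} :
    Relation.TransGen Step [(Γ, A)] [] ↔ Nd Γ A :=
  ⟨fun h => (AllNd.of_transGen_nil h).1,
    fun h => h.transGen_step subset_rfl []⟩
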